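/- arXiv:1507.04545 — 3 statements merged into one kernel-verified Lean document; each statement's English description precedes it below -/
import Mathlib

section
/- For every m ∈ [2, ∞) there exists a constant c > 0 such that for all real numbers a, b one has (a - b)(a^[m-1] - b^[m-1]) ≥ c |a - b|^m, where x^[r] denotes |x|^(r-1)·x (the signed power). -/
/-!
With `p = m - 1 ≥ 1` it suffices to show `(a - b)^p ≤ 2^(p-1) (a^[p] - b^[p])` for `b ≤ a`.
When `a` and `b` have the same sign this holds even without the factor `2^(p-1)`, by
superadditivity of `t ↦ t^p` on `[0, ∞)`. When `b < 0 < a` the right-hand side is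
`2^(p-1) (a^p + |b|^p)`, which bounds `(a + |b|)^p` by convexity of `t ↦ t^p`.
-/

/-- Signed power: `x^[r] = |x|^(r-1) * x` (real exponent, `0^[r] = 0`). -/
noncomputable def sgnPow (x r : ℝ) : ℝ := |x| ^ (r - 1) * x

open scoped NNReal

lemma sgnPow_neg (x r : ℝ) : sgnPow (-x) r = -sgnPow x r := by
  simp [sgnPow]

lemma sgnPow_of_nonneg {x r : ℝ} (hx : 0 ≤ x) (hr : r ≠ 0) : sgnPow x r = x ^ r := by
  rw [sgnPow, abs_of_nonneg hx, ← Real.rpow_add_one' hx (by simpa using hr), sub_add_cancel]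

lemma Real.rpow_add_le_mul_rpow_add_rpow {x y p : ℝ} (hx : 0 ≤ x) (hy : 0 ≤ y) (hp : 1 ≤ p) :
    (x + y) ^ p ≤ 2 ^ (p - 1) * (x ^ p + y ^ p) := by
  lift x to ℝ≥0 using hx
  lift y to ℝ≥0 using hy
  exact_mod_cast NNReal.rpow_add_le_mul_rpow_add_rpow x y hp

section SgnPowSub

variable {a b p : ℝ}

lemma rpow_sub_le_sgnPow_sub_of_nonneg (hp : 1 ≤ p) (hb : 0 ≤ b) (hba : b ≤ a) :
    (a - b) ^ p ≤ sgnPow a p - sgnPow b p := by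
  have hp0 : p ≠ 0 := by positivity
  have h := Real.add_rpow_le_rpow_add (sub_nonneg.2 hba) hb hp
  rw [sub_add_cancel] at h
  rw [sgnPow_of_nonneg (hb.trans hba) hp0, sgnPow_of_nonneg hb hp0]
  linarith

lemma rpow_sub_le_sgnPow_sub_of_nonpos (hp : 1 ≤ p) (ha : a ≤ 0) (hba : b ≤ a) :
    (a - b) ^ p ≤ sgnPow a p - sgnPow b p := by
  have h := rpow_sub_le_sgnPow_sub_of_nonneg hp (neg_nonneg.2 ha) (neg_le_neg hba)
  rw [sgnPow_neg, sgnPow_neg, neg_sub_neg] at h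
  linarith

lemma rpow_sub_le_two_rpow_mul_sgnPow_sub_of_neg_of_pos (hp : 1 ≤ p) (hb : b < 0) (ha : 0 < a) :
    (a - b) ^ p ≤ 2 ^ (p - 1) * (sgnPow a p - sgnPow b p) := by
  have hp0 : p ≠ 0 := by positivity
  have hb' : sgnPow b p = -(-b) ^ p := by
    rw [← neg_neg b, sgnPow_neg, neg_neg, sgnPow_of_nonneg (by linarith) hp0]
  rw [sgnPow_of_nonneg ha.le hp0, hb', sub_neg_eq_add, sub_eq_add_neg]
  exact Real.rpow_add_le_mul_rpow_add_rpow ha.le (by linarith) hp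

lemma rpow_sub_le_two_rpow_mul_sgnPow_sub (hp : 1 ≤ p) (hba : b ≤ a) :
    (a - b) ^ p ≤ 2 ^ (p - 1) * (sgnPow a p - sgnPow b p) := by
  have weaken {D : ℝ} (h : (a - b) ^ p ≤ D) : (a - b) ^ p ≤ 2 ^ (p - 1) * D :=
    h.trans <| le_mul_of_one_le_left ((Real.rpow_nonneg (by linarith) p).trans h)
      (Real.one_le_rpow one_le_two (by linarith))
  rcases lt_or_ge b 0 with hb | hb
  · rcases lt_or_ge 0 a with ha | ha
    · exact rpow_sub_le_two_rpow_mul_sgnPow_sub_of_neg_of_pos hp hb ha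
    · exact weaken (rpow_sub_le_sgnPow_sub_of_nonpos hp ha hba)
  · exact weaken (rpow_sub_le_sgnPow_sub_of_nonneg hp hb hba)

lemma two_rpow_mul_abs_sub_rpow_le_mul_sgnPow_sub (hp : 1 ≤ p) (a b : ℝ) :
    2 ^ (1 - p) * |a - b| ^ (p + 1) ≤ (a - b) * (sgnPow a p - sgnPow b p) := by
  wlog hba : b ≤ a generalizing a b
  · have h := this b a (by linarith)
    rw [abs_sub_comm] at h
    linarith
  have hab : 0 ≤ a - b := sub_nonneg.2 hba
  have h := rpow_sub_le_two_rpow_mul_sgnPow_sub hp hba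
  rw [← neg_sub, Real.rpow_neg zero_le_two, inv_mul_le_iff₀ (by positivity), abs_of_nonneg hab,
    Real.rpow_add_one' hab (by linarith)]
  calc (a - b) ^ p * (a - b)
      ≤ 2 ^ (p - 1) * (sgnPow a p - sgnPow b p) * (a - b) := mul_le_mul_of_nonneg_right h hab
    _ = 2 ^ (p - 1) * ((a - b) * (sgnPow a p - sgnPow b p)) := by ring

end SgnPowSub

/-- For every `m ∈ [2,∞)` there is `c > 0` such that
`(a - b) * (a^[m-1] - b^[m-1]) ≥ c * |a - b|^m` for all reals `a, b`. -/
theorem stmt0 :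
    ∀ m : ℝ, 2 ≤ m →
      ∃ c : ℝ, 0 < c ∧ ∀ a b : ℝ,
        c * |a - b| ^ m ≤ (a - b) * (sgnPow a (m - 1) - sgnPow b (m - 1)) := by
  intro m hm
  refine ⟨2 ^ (1 - (m - 1)), by positivity, fun a b => ?_⟩
  simpa using two_rpow_mul_abs_sub_rpow_le_mul_sgnPow_sub (p := m - 1) (by linarith) a b
end

section
/- Let ψ(a) = |a|^p / p for p ∈ [1,2), and let ψ^δ be its Moreau–Yosida regularization. Then there exist constants c > 0 and C > 0 such that for all δ ∈ (0,1] and all a ∈ ℝ, ψ^δ(a) ≥ c·ψ(a) − C·δ. -/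
/-- The singular power `ψ(a) = |a|^p / p`. -/
noncomputable def psi (p a : ℝ) : ℝ := |a| ^ p / p

/-- The Moreau–Yosida regularization `ψ^δ(a) = inf_b ( |a-b|²/(2δ) + ψ(b) )`. -/
noncomputable def psiMY (p δ a : ℝ) : ℝ := ⨅ b : ℝ, ((a - b) ^ 2 / (2 * δ) + psi p b)

/-!
Bound the objective `|a-b|²/(2δ) + ψ(b)` from below uniformly in `b`. Convexity of `x ↦ x^p`
splits `|a|^p` into `|a-b|^p` and `|b|^p`, and for `1 ≤ p ≤ 2`, `δ ≤ 1` the power `t^p` is at most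
`t²/δ + δ`: for `t ≥ 1` it is below `t²`, and for `t ≤ 1` below `t ≤ t²/δ + δ` (AM–GM).
-/

theorem rpow_le_sq_div_add {p t δ : ℝ} (hp1 : 1 ≤ p) (hp2 : p ≤ 2) (ht : 0 ≤ t)
    (hδ0 : 0 < δ) (hδ1 : δ ≤ 1) : t ^ p ≤ t ^ 2 / δ + δ := by
  rcases le_total t 1 with ht1 | ht1
  · have hamgm : t ≤ t ^ 2 / δ + δ := by
      rw [div_add' _ _ _ hδ0.ne', le_div_iff₀ hδ0]
      nlinarith [sq_nonneg (t - δ)]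
    exact (Real.rpow_le_self_of_le_one ht ht1 hp1).trans hamgm
  · calc t ^ p ≤ t ^ (2 : ℝ) := Real.rpow_le_rpow_of_exponent_le ht1 hp2
      _ = t ^ 2 := Real.rpow_two t
      _ ≤ t ^ 2 / δ := le_div_self (by positivity) hδ0 hδ1
      _ ≤ t ^ 2 / δ + δ := le_add_of_nonneg_right hδ0.le

theorem abs_rpow_le_two_rpow_mul {p : ℝ} (hp : 1 ≤ p) (a b : ℝ) :
    |a| ^ p ≤ 2 ^ (p - 1) * (|a - b| ^ p + |b| ^ p) := by
  have hconv := NNReal.rpow_add_le_mul_rpow_add_rpow ⟨|a - b|, abs_nonneg _⟩ ⟨|b|, abs_nonneg _⟩ hp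
  have htri : |a| ≤ |a - b| + |b| := by linarith [abs_sub_abs_le_abs_sub a b]
  calc |a| ^ p ≤ (|a - b| + |b|) ^ p := Real.rpow_le_rpow (abs_nonneg a) htri (by linarith)
    _ ≤ 2 ^ (p - 1) * (|a - b| ^ p + |b| ^ p) := by exact_mod_cast hconv

theorem mul_psi_sub_le_sq_div_add_psi {p δ : ℝ} (hp1 : 1 ≤ p) (hp2 : p ≤ 2)
    (hδ0 : 0 < δ) (hδ1 : δ ≤ 1) (a b : ℝ) :
    (2 * 2 ^ (p - 1))⁻¹ * psi p a - δ / 2 ≤ (a - b) ^ 2 / (2 * δ) + psi p b := by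
  have hp0 : 0 < p := by linarith
  have hsplit : (2 ^ (p - 1))⁻¹ * |a| ^ p ≤ |a - b| ^ p + |b| ^ p :=
    (inv_mul_le_iff₀ (by positivity)).mpr (abs_rpow_le_two_rpow_mul hp1 a b)
  have hsmall := rpow_le_sq_div_add hp1 hp2 (abs_nonneg (a - b)) hδ0 hδ1
  rw [sq_abs] at hsmall
  calc (2 * 2 ^ (p - 1))⁻¹ * psi p a - δ / 2
      = (2 ^ (p - 1))⁻¹ * |a| ^ p / (2 * p) - δ / 2 := by unfold psi; ring
    _ ≤ (|a - b| ^ p + |b| ^ p) / (2 * p) - δ / 2 := by gcongr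
    _ ≤ ((a - b) ^ 2 / δ + δ + |b| ^ p) / (2 * p) - δ / 2 := by gcongr
    _ = ((a - b) ^ 2 / δ + δ) / (2 * p) + |b| ^ p / (2 * p) - δ / 2 := by ring
    _ ≤ ((a - b) ^ 2 / δ + δ) / 2 + |b| ^ p / p - δ / 2 := by
        gcongr
        · linarith
        · linarith
    _ = (a - b) ^ 2 / (2 * δ) + psi p b := by unfold psi; field_simp; ring

/-- For `p ∈ [1,2)` there are `c, C > 0` with `ψ^δ(a) ≥ c·ψ(a) − C·δ`
for all `δ ∈ (0,1]` and all `a ∈ ℝ`. -/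
theorem stmt2 (p : ℝ) (hp1 : 1 ≤ p) (hp2 : p < 2) :
    ∃ c C : ℝ, 0 < c ∧ 0 < C ∧ ∀ δ ∈ Set.Ioc (0 : ℝ) 1, ∀ a : ℝ,
      c * psi p a - C * δ ≤ psiMY p δ a := by
  refine ⟨(2 * 2 ^ (p - 1))⁻¹, 1 / 2, by positivity, by norm_num, ?_⟩
  rintro δ ⟨hδ0, hδ1⟩ a
  refine le_ciInf fun b => ?_
  rw [one_div_mul_eq_div]
  exact mul_psi_sub_le_sq_div_add_psi hp1 hp2.le hδ0 hδ1 a b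
end

section
/- Let ψ(a) = |a|^p/p with p ∈ [1,2) and ψ^δ its Moreau–Yosida regularization. Then there exists C > 0 such that |ψ^δ(a) − ψ(a)| ≤ C·δ·(1 + ψ(a)) for all a ∈ ℝ and δ ∈ (0,1]. -/
/-! The infimum defining `ψ^δ(a)` lies between `ψ(a) - δ (1 + ψ(a))` and its value `ψ(a)` at
`b = a`. For the lower bound, the tangent-line inequality for the convex function `ψ` gives
`ψ(a) - ψ(b) ≤ |a|^(p-1) |a - b|`, and Young's inequality splits the right-hand side into
`|a - b|² / (2δ)` plus `δ |a|^(2p-2) / 2`; since `0 ≤ 2p - 2 ≤ p`, the latter is at most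
`δ (1 + |a|^p) / 2 ≤ δ (1 + ψ(a))`. -/

namespace Real

lemma rpow_sub_rpow_le_mul_rpow_mul_sub {p x y : ℝ} (hp : 1 ≤ p) (hx : 0 < x) (hy : 0 ≤ y) :
    x ^ p - y ^ p ≤ p * x ^ (p - 1) * (x - y) := by
  have hbern := one_add_mul_self_le_rpow_one_add
    (s := y / x - 1) (by linarith [div_nonneg hy hx.le]) hp
  rw [add_sub_cancel, div_rpow hy hx.le, le_div_iff₀ (rpow_pos_of_pos hx p)] at hbern
  have hxp : x ^ p = x ^ (p - 1) * x := by rw [← rpow_add_one hx.ne', sub_add_cancel]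
  rw [hxp] at hbern ⊢
  have hcancel : (1 + p * (y / x - 1)) * (x ^ (p - 1) * x) =
      x ^ (p - 1) * x + p * x ^ (p - 1) * (y - x) := by
    field_simp
  linarith

lemma rpow_le_one_add_rpow {x q r : ℝ} (hx : 0 ≤ x) (hq : 0 ≤ q) (hqr : q ≤ r) :
    x ^ q ≤ 1 + x ^ r := by
  rcases le_total x 1 with hx1 | hx1
  · linarith [rpow_le_one hx hx1 hq, rpow_nonneg hx r]
  · linarith [rpow_le_rpow_of_exponent_le hx1 hqr]

end Real

lemma psi_nonneg {p : ℝ} (hp : 0 ≤ p) (a : ℝ) : 0 ≤ psi p a :=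
  div_nonneg (Real.rpow_nonneg (abs_nonneg a) p) hp

lemma psi_sub_psi_le {p : ℝ} (hp : 1 ≤ p) (a b : ℝ) :
    psi p a - psi p b ≤ |a| ^ (p - 1) * |a - b| := by
  have hp0 : 0 < p := by linarith
  rcases le_or_gt |a| |b| with hab | hba
  · have hmono : psi p a ≤ psi p b := by
      unfold psi
      gcongr
    have hrhs : 0 ≤ |a| ^ (p - 1) * |a - b| := by positivity
    linarith
  · have htangent := Real.rpow_sub_rpow_le_mul_rpow_mul_sub hp
      ((abs_nonneg b).trans_lt hba) (abs_nonneg b)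
    have hdist : |a| - |b| ≤ |a - b| := abs_sub_abs_le_abs_sub a b
    have hslope : 0 ≤ p * |a| ^ (p - 1) := by positivity
    rw [psi, psi, div_sub_div_same, div_le_iff₀ hp0]
    nlinarith [mul_le_mul_of_nonneg_left hdist hslope]

lemma sq_rpow_sub_one_le_one_add_mul_psi {p : ℝ} (hp1 : 1 ≤ p) (hp2 : p ≤ 2) (a : ℝ) :
    (|a| ^ (p - 1)) ^ 2 ≤ 1 + p * psi p a := by
  have hpsi : p * psi p a = |a| ^ p := by
    rw [psi]
    field_simp
  rw [hpsi, ← Real.rpow_mul_natCast (abs_nonneg a)]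
  exact Real.rpow_le_one_add_rpow (abs_nonneg a) (by push_cast; linarith) (by push_cast; linarith)

lemma psi_sub_le_yosida_integrand {p δ : ℝ} (hp1 : 1 ≤ p) (hp2 : p ≤ 2) (hδ : 0 < δ) (a b : ℝ) :
    psi p a - δ * (1 + psi p a) ≤ (a - b) ^ 2 / (2 * δ) + psi p b := by
  set v := |a| ^ (p - 1)
  have hyoung : v * |a - b| ≤ (a - b) ^ 2 / (2 * δ) + δ / 2 * v ^ 2 := by
    rw [div_add' _ _ _ (by positivity), le_div_iff₀ (by positivity), ← sq_abs (a - b)]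
    nlinarith [sq_nonneg (|a - b| - δ * v)]
  have hv : v ^ 2 ≤ 1 + p * psi p a := sq_rpow_sub_one_le_one_add_mul_psi hp1 hp2 a
  have hψ : 0 ≤ psi p a := psi_nonneg (by linarith) a
  have hremainder : δ / 2 * v ^ 2 ≤ δ * (1 + psi p a) :=
    calc δ / 2 * v ^ 2 ≤ δ / 2 * (1 + p * psi p a) := by gcongr
      _ ≤ δ * (1 + psi p a) := by nlinarith [mul_nonneg hδ.le (mul_nonneg (sub_nonneg.2 hp2) hψ)]
  linarith [psi_sub_psi_le hp1 a b]

lemma psiMY_le_psi {p δ : ℝ} (hp : 0 ≤ p) (hδ : 0 < δ) (a : ℝ) : psiMY p δ a ≤ psi p a := by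
  have hbdd : BddBelow (Set.range fun b => (a - b) ^ 2 / (2 * δ) + psi p b) :=
    ⟨0, by rintro _ ⟨b, rfl⟩; positivity [psi_nonneg hp b]⟩
  exact (ciInf_le hbdd a).trans_eq (by simp)

lemma psi_sub_le_psiMY {p δ : ℝ} (hp1 : 1 ≤ p) (hp2 : p ≤ 2) (hδ : 0 < δ) (a : ℝ) :
    psi p a - δ * (1 + psi p a) ≤ psiMY p δ a :=
  le_ciInf (psi_sub_le_yosida_integrand hp1 hp2 hδ a)

/-- For `p ∈ [1,2)` there is `C > 0` such that
`|ψ^δ(a) − ψ(a)| ≤ C·δ·(1 + ψ(a))` for all `a ∈ ℝ`, `δ ∈ (0,1]`. -/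
theorem stmt3 (p : ℝ) (hp1 : 1 ≤ p) (hp2 : p < 2) :
    ∃ C : ℝ, 0 < C ∧ ∀ a : ℝ, ∀ δ ∈ Set.Ioc (0 : ℝ) 1,
      |psiMY p δ a - psi p a| ≤ C * δ * (1 + psi p a) := by
  have hp0 : 0 ≤ p := by linarith
  refine ⟨1, one_pos, fun a δ ⟨hδ, _⟩ => abs_le.2 ⟨?_, ?_⟩⟩
  · linarith [psi_sub_le_psiMY hp1 hp2.le hδ a]
  · have := mul_nonneg hδ.le (add_nonneg zero_le_one (psi_nonneg hp0 a))
    linarith [psiMY_le_psi hp0 hδ a]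
end
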